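/- arXiv:1512.03254 — 3 statements merged into one kernel-verified Lean document; each statement's English description precedes it below -/
import Mathlib

section
/- Let W = S_{n+1} be the symmetric group acting as the Weyl group of type A_n, and let α_{ij} = α_i + ⋯ + α_{j-1} for 1 ≤ i < j ≤ n+1. For w ∈ S_{n+1}, there is an edge w → w s_{α_{ij}} in the quantum Bruhat graph if and only if there is no k with i < k < j and w(i) ≺ w(k) ≺ w(j), where ≺ denotes the circular order starting at w(i). Moreover, this edge is a quantum edge if and only if w(i) > w(j). -/
/-!
STATEMENT 3: Description of the quantum Bruhat graph in type `A_n` (Lenart).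

The Weyl group is `S_{n+1}`, acting on `Fin (n+1)`; the reflection in the root
`α_{ij} = α_i + ⋯ + α_{j-1}` (for `i < j`) is the transposition `(i j)`, the length is the
number of inversions, and `⟨2ρ, α_{ij}^∨⟩ = 2 (j - i)`.  The circular order starting at `a`
is measured by `circDist a b = (b - a) mod (n+1)`; `w(k)` lies strictly between `w(i)` and
`w(j)` in the circular order starting at `w(i)` iff
`0 < circDist (w i) (w k) < circDist (w i) (w j)`.

There is an edge `w → w s_{α_{ij}}` in the quantum Bruhat graph iff there is no `k` with
`i < k < j` and `w(i) ≺ w(k) ≺ w(j)`; and (given the edge exists) it is a quantum edge iff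
`w(i) > w(j)`.
-/

/-- Number of inversions of a permutation of `Fin m` = Coxeter length in type A. -/
def invLength {m : ℕ} (w : Equiv.Perm (Fin m)) : ℕ :=
  (Finset.univ.filter (fun p : Fin m × Fin m => p.1 < p.2 ∧ w p.2 < w p.1)).card

/-- `circDist m a b` : position of `b` in the circular order on `Fin m` starting at `a`. -/
def circDist {m : ℕ} (a b : Fin m) : ℕ := (b.val + m - a.val) % m

/-!
Transposing the values of `w` at positions `i < j` changes the number of inversions by
`±(1 + 2N)`, where `N` counts the positions `k` strictly between `i` and `j` whose value lies
strictly between `w i` and `w j`. If `w i < w j` the length goes up, so only a Bruhat edge is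
possible, and there is one iff `N = 0`. If `w j < w i` the length drops by
`1 + 2N ≤ 2(j - i) - 1`, with equality (a quantum edge) iff every `w k` with `i < k < j` lies
between `w j` and `w i`. In both cases this says that no `w k` lies strictly between `w i` and
`w j` in the circular order starting at `w i`.
-/

open Equiv Finset

theorem sum_sum_eq_of_eq_zero_off_pair {α M : Type*} [Fintype α] [DecidableEq α]
    [AddCommMonoid M] {i j : α} (hij : i ≠ j) (g : α → α → M)
    (hg : ∀ p q, p ≠ i → p ≠ j → q ≠ i → q ≠ j → g p q = 0) :
    ∑ p, ∑ q, g p q =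
      g i i + g i j + g j i + g j j + ∑ k ∈ {i, j}ᶜ, (g i k + g j k + g k i + g k j) := by
  have hrow (p : α) : ∑ q, g p q = g p i + g p j + ∑ q ∈ {i, j}ᶜ, g p q := by
    rw [← sum_add_sum_compl {i, j}, sum_pair hij]
  have hout : ∀ p ∈ ({i, j}ᶜ : Finset α), ∑ q, g p q = g p i + g p j := by
    intro p hp
    simp only [mem_compl, mem_insert, mem_singleton, not_or] at hp
    rw [hrow, sum_eq_zero fun q hq => ?_, add_zero]
    simp only [mem_compl, mem_insert, mem_singleton, not_or] at hq
    exact hg p q hp.1 hp.2 hq.1 hq.2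
  rw [← sum_add_sum_compl {i, j}, sum_pair hij, hrow i, hrow j, sum_congr rfl hout]
  simp only [sum_add_distrib]
  abel

section Circular

variable {m : ℕ} {a b c : Fin m}

theorem circDist_of_le (h : a ≤ b) : circDist a b = b - a := by
  have := b.isLt
  rw [circDist, Nat.sub_add_comm h, Nat.add_mod_right, Nat.mod_eq_of_lt (by omega)]

theorem circDist_of_lt (h : b < a) : circDist a b = b + m - a := by
  have := a.isLt
  rw [circDist, Nat.mod_eq_of_lt (by omega)]

theorem circDist_between_iff_of_lt (hac : a < c) :
    (0 < circDist a b ∧ circDist a b < circDist a c) ↔ a < b ∧ b < c := by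
  rw [circDist_of_le hac.le]
  rcases lt_or_ge b a with h | h
  · rw [circDist_of_lt h]; omega
  · rw [circDist_of_le h]; omega

theorem circDist_between_iff_of_gt (hca : c < a) :
    (0 < circDist a b ∧ circDist a b < circDist a c) ↔ b < c ∨ a < b := by
  rw [circDist_of_lt hca]
  rcases lt_or_ge b a with h | h
  · rw [circDist_of_lt h]; omega
  · rw [circDist_of_le h]; omega

end Circular

section Inversions

variable {m : ℕ}

def inversionIndicator (v : Perm (Fin m)) (p q : Fin m) : ℤ :=
  if p < q ∧ v q < v p then 1 else 0

theorem invLength_eq_sum_inversionIndicator (v : Perm (Fin m)) :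
    (invLength v : ℤ) = ∑ p, ∑ q, inversionIndicator v p q := by
  rw [invLength, card_filter, ← Fintype.sum_prod_type']
  push_cast
  rfl

theorem invLength_mul_swap_of_lt (w : Perm (Fin m)) {i j : Fin m} (hij : i < j)
    (hw : w i < w j) :
    invLength (w * swap i j) =
      invLength w + 1 + 2 * #{k ∈ Ioo i j | w i < w k ∧ w k < w j} := by
  set u := w * swap i j
  have hui : u i = w j := by simp [u]
  have huj : u j = w i := by simp [u]
  have huk (k : Fin m) (hki : k ≠ i) (hkj : k ≠ j) : u k = w k := by
    simp [u, swap_apply_of_ne_of_ne hki hkj]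
  set g : Fin m → Fin m → ℤ := fun p q => inversionIndicator u p q - inversionIndicator w p q
  have hdiff : (invLength u : ℤ) - invLength w = ∑ p, ∑ q, g p q := by
    simp only [g, invLength_eq_sum_inversionIndicator, ← sum_sub_distrib]
  have hg (p q : Fin m) (hpi : p ≠ i) (hpj : p ≠ j) (hqi : q ≠ i) (hqj : q ≠ j) :
      g p q = 0 := by
    simp [g, inversionIndicator, huk p hpi hpj, huk q hqi hqj]
  have hcross : ∀ k ∈ ({i, j}ᶜ : Finset (Fin m)), g i k + g j k + g k i + g k j =
      2 * if k ∈ Ioo i j ∧ w i < w k ∧ w k < w j then 1 else 0 := by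
    intro k hk
    simp only [mem_compl, mem_insert, mem_singleton, not_or] at hk
    obtain ⟨hki, hkj⟩ := hk
    have hwki : w k ≠ w i := w.injective.ne hki
    have hwkj : w k ≠ w j := w.injective.ne hkj
    simp only [g, inversionIndicator, huk k hki hkj, hui, huj, mem_Ioo]
    split_ifs <;> omega
  have hcount : ∑ k ∈ ({i, j}ᶜ : Finset (Fin m)),
      (if k ∈ Ioo i j ∧ w i < w k ∧ w k < w j then (1 : ℤ) else 0) =
        #{k ∈ Ioo i j | w i < w k ∧ w k < w j} := by
    rw [sum_boole]
    congr 2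
    ext k
    simp only [mem_filter, mem_compl, mem_insert, mem_singleton, mem_Ioo]
    constructor
    · exact And.right
    · rintro ⟨⟨hik, hkj⟩, hwk⟩
      exact ⟨not_or.mpr ⟨hik.ne', hkj.ne⟩, ⟨hik, hkj⟩, hwk⟩
  rw [sum_sum_eq_of_eq_zero_off_pair hij.ne g hg, sum_congr rfl hcross, ← mul_sum, hcount]
    at hdiff
  simp [g, inversionIndicator, hui, huj, hij, hw, hw.not_gt, hij.not_gt] at hdiff
  omega

theorem invLength_mul_swap_of_gt (w : Perm (Fin m)) {i j : Fin m} (hij : i < j)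
    (hw : w j < w i) :
    invLength w =
      invLength (w * swap i j) + 1 + 2 * #{k ∈ Ioo i j | w j < w k ∧ w k < w i} := by
  have h := invLength_mul_swap_of_lt (w * swap i j) hij (by simpa using hw)
  rw [mul_swap_mul_self] at h
  rw [h]
  congr 3
  refine filter_congr fun k hk => ?_
  rw [mem_Ioo] at hk
  simp [swap_apply_of_ne_of_ne hk.1.ne' hk.2.ne]

variable {w : Perm (Fin m)} {i j : Fin m}

theorem invLength_mul_swap_eq_add_one_iff_of_lt (hij : i < j) (hw : w i < w j) :
    invLength (w * swap i j) = invLength w + 1 ↔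
      ∀ k ∈ Ioo i j, ¬(w i < w k ∧ w k < w j) := by
  rw [invLength_mul_swap_of_lt w hij hw, ← filter_eq_empty_iff, ← card_eq_zero]
  omega

theorem invLength_mul_swap_eq_sub_iff_of_gt (hij : i < j) (hw : w j < w i) :
    (invLength (w * swap i j) : ℤ) = invLength w - 2 * ((j : ℤ) - i) + 1 ↔
      ∀ k ∈ Ioo i j, w j < w k ∧ w k < w i := by
  have hIoo : #(Ioo i j) + 1 = j - i := by rw [Fin.card_Ioo]; omega
  rw [← card_filter_eq_iff, invLength_mul_swap_of_gt w hij hw]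
  have : (i : ℕ) < j := hij
  push_cast
  omega

theorem not_exists_circDist_between_iff_of_lt (hw : w i < w j) :
    (¬∃ k, i < k ∧ k < j ∧
        0 < circDist (w i) (w k) ∧ circDist (w i) (w k) < circDist (w i) (w j)) ↔
      ∀ k ∈ Ioo i j, ¬(w i < w k ∧ w k < w j) := by
  simp only [circDist_between_iff_of_lt hw, mem_Ioo, not_exists, not_and, and_imp]

theorem not_exists_circDist_between_iff_of_gt (hw : w j < w i) :
    (¬∃ k, i < k ∧ k < j ∧
        0 < circDist (w i) (w k) ∧ circDist (w i) (w k) < circDist (w i) (w j)) ↔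
      ∀ k ∈ Ioo i j, w j < w k ∧ w k < w i := by
  simp only [circDist_between_iff_of_gt hw, mem_Ioo, not_exists, not_and, and_imp, not_or, not_lt]
  refine forall_congr' fun k => imp_congr_right fun hik => imp_congr_right fun hkj => ?_
  rw [(w.injective.ne hkj.ne').le_iff_lt, (w.injective.ne hik.ne').le_iff_lt]

end Inversions

theorem quantum_bruhat_graph_type_A (n : ℕ) (w : Equiv.Perm (Fin (n + 1)))
    (i j : Fin (n + 1)) (hij : i < j) :
    -- the edge `w → w s_{α_{ij}}` exists iff there is no `k` with `i < k < j` and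
    -- `w(i) ≺ w(k) ≺ w(j)` in the circular order starting at `w(i)` …
    ((invLength (w * Equiv.swap i j) = invLength w + 1 ∨
        (invLength (w * Equiv.swap i j) : ℤ) =
          (invLength w : ℤ) - 2 * ((j : ℤ) - (i : ℤ)) + 1)
      ↔ ¬∃ k : Fin (n + 1), i < k ∧ k < j ∧
          0 < circDist (w i) (w k) ∧ circDist (w i) (w k) < circDist (w i) (w j)) ∧
    -- …and, given that the edge exists, it is a quantum edge iff `w i > w j`.
    ((invLength (w * Equiv.swap i j) = invLength w + 1 ∨
        (invLength (w * Equiv.swap i j) : ℤ) =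
          (invLength w : ℤ) - 2 * ((j : ℤ) - (i : ℤ)) + 1) →
      ((invLength (w * Equiv.swap i j) : ℤ) =
          (invLength w : ℤ) - 2 * ((j : ℤ) - (i : ℤ)) + 1 ↔ w j < w i)) := by
  have hij_int : (i : ℤ) < j := by exact_mod_cast hij
  rcases (w.injective.ne hij.ne).lt_or_gt with hw | hw
  · have hlen := invLength_mul_swap_of_lt w hij hw
    have hquantum : ¬(invLength (w * swap i j) : ℤ) = invLength w - 2 * ((j : ℤ) - i) + 1 := by
      omega
    refine ⟨?_, fun _ => iff_of_false hquantum hw.not_gt⟩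
    rw [or_iff_left hquantum, invLength_mul_swap_eq_add_one_iff_of_lt hij hw,
      not_exists_circDist_between_iff_of_lt hw]
  · have hlen := invLength_mul_swap_of_gt w hij hw
    have hbruhat : invLength (w * swap i j) ≠ invLength w + 1 := by omega
    refine ⟨?_, fun hedge => iff_of_true ((or_iff_right hbruhat).mp hedge) hw⟩
    rw [or_iff_right hbruhat, invLength_mul_swap_eq_sub_iff_of_gt hij hw,
      not_exists_circDist_between_iff_of_gt hw]
end

section
/- Let ω_i be a fundamental weight of a simple Lie algebra and fix any reduced decomposition t_{-ω_i} = π s_{t_1} ⋯ s_{t_r} in the extended affine Weyl group, with associated sequence of affine coroots β_j = s_{t_r} ⋯ s_{t_{j+1}}(α_{t_j}^∨). Then the multiset of real parts {Re β_j} equals the multiset in which each negative coroot γ ∈ Δ₋^∨ with ⟨γ, ω_i⟩ < 0 appears exactly -⟨γ, ω_i⟩ times, and for each such γ the set {β_j : Re β_j = γ} equals {γ + δ, γ + 2δ, ..., γ - ⟨γ, ω_i⟩ δ}. -/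
/-!
Affine coroots `γ + dδ` are encoded as pairs `(γ, d)`, and `t_{-ω_i}` sends `(γ, d)` to
`(γ, d + ⟨γ, ω_i⟩)`, so a positive affine coroot is inverted exactly when it becomes negative
after its degree is shifted by `⟨γ, ω_i⟩`. Shifting by a nonnegative amount preserves
positivity, so dominance of `ω_i` rules out every positive `γ`; for `γ ∉ Δ₊` positivity is
just `d > 0`, so the inverted degrees are `1, …, -⟨γ, ω_i⟩`. Injectivity of `β` turns this
set of degrees into the count of indices with real part `γ`.
-/

/-- Positivity of an affine coroot `γ + dδ`. -/
def AffCorootPos {V : Type*} (Δpos : Set V) (p : V × ℤ) : Prop :=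
  0 < p.2 ∨ (p.2 = 0 ∧ p.1 ∈ Δpos)

namespace AffCorootPos

variable {V : Type*} {Δpos : Set V} {γ : V} {d c : ℤ}

theorem add_degree (h : AffCorootPos Δpos (γ, d)) (hc : 0 ≤ c) :
    AffCorootPos Δpos (γ, d + c) := by
  rcases h with hd | ⟨hd, hγ⟩
  · exact Or.inl (by dsimp only at hd ⊢; omega)
  · rcases hc.lt_or_eq with hc | rfl
    · exact Or.inl (by dsimp only at hd ⊢; omega)
    · rw [add_zero]
      exact Or.inr ⟨hd, hγ⟩

theorem iff_of_notMem (hγ : γ ∉ Δpos) : AffCorootPos Δpos (γ, d) ↔ 0 < d := by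
  simp [AffCorootPos, hγ]

theorem not_inverted_of_nonneg (hc : 0 ≤ c) :
    ¬ (AffCorootPos Δpos (γ, d) ∧ ¬ AffCorootPos Δpos (γ, d + c)) :=
  fun ⟨hpos, hneg⟩ => hneg (hpos.add_degree hc)

theorem inverted_iff_mem_Icc (hγ : γ ∉ Δpos) :
    (AffCorootPos Δpos (γ, d) ∧ ¬ AffCorootPos Δpos (γ, d + c)) ↔ d ∈ Set.Icc 1 (-c) := by
  rw [iff_of_notMem hγ, iff_of_notMem hγ, Set.mem_Icc]
  omega

end AffCorootPos

theorem Function.Injective.nat_card_fiber_fst_eq {ι V W : Type*} {f : ι → V × W}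
    (hf : Function.Injective f) (γ : V) :
    Nat.card {j // (f j).1 = γ} = Nat.card {d | (γ, d) ∈ Set.range f} := by
  refine Nat.card_congr (Equiv.ofBijective (fun j => ⟨(f j.1).2, j.1, Prod.ext j.2 rfl⟩) ⟨?_, ?_⟩)
  · rintro ⟨j, hj⟩ ⟨k, hk⟩ h
    exact Subtype.ext (hf (Prod.ext (hj.trans hk.symm) (congrArg Subtype.val h)))
  · rintro ⟨d, j, hj⟩
    exact ⟨⟨j, by rw [hj]⟩, Subtype.ext (by simp [hj])⟩

theorem Int.nat_card_Icc_one (n : ℤ) : Nat.card (Set.Icc 1 n) = n.toNat := by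
  rw [Nat.card_eq_card_toFinset, Set.toFinset_Icc, Int.card_Icc, add_sub_cancel_right]

theorem beta_sequence_of_fundamental_translation
    {V : Type*} [AddCommGroup V]
    (Δpos : Set V)                        -- positive coroots of the finite system
    (pairω : V → ℤ)                       -- `γ ↦ ⟨γ, ω_i⟩`
    (hdisj : ∀ γ ∈ Δpos, -γ ∉ Δpos)
    (hdom : ∀ γ ∈ Δpos, 0 ≤ pairω γ)      -- `ω_i` is dominant
    {r : ℕ} (β : Fin r → V × ℤ)           -- the β-sequence of a reduced decomposition
    (hroots : ∀ j, (β j).1 ∈ Δpos ∨ -(β j).1 ∈ Δpos)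
    (hβinj : Function.Injective β)
    -- `β` enumerates the positive affine coroots mapped to negative ones by `t_{-ω_i}`:
    (hchar : ∀ (γ : V) (d : ℤ), (γ, d) ∈ Set.range β ↔
      (AffCorootPos Δpos (γ, d) ∧ ¬ AffCorootPos Δpos (γ, d + pairω γ))) :
    -- every real part is a negative coroot pairing negatively with `ω_i` …
    (∀ j, -(β j).1 ∈ Δpos ∧ pairω (β j).1 < 0) ∧
    -- …each such `γ` occurs exactly `-⟨γ, ω_i⟩` times…
    (∀ γ : V, -γ ∈ Δpos → pairω γ < 0 →
      Nat.card {j : Fin r // (β j).1 = γ} = (-pairω γ).toNat) ∧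
    -- …with set of degrees `{γ + δ, …, γ - ⟨γ, ω_i⟩ δ}`.
    (∀ γ : V, -γ ∈ Δpos → pairω γ < 0 →
      {d : ℤ | (γ, d) ∈ Set.range β} = Set.Icc 1 (-pairω γ)) := by
  have degrees : ∀ γ ∉ Δpos, {d : ℤ | (γ, d) ∈ Set.range β} = Set.Icc 1 (-pairω γ) :=
    fun γ hγ => Set.ext fun d => (hchar γ d).trans (AffCorootPos.inverted_iff_mem_Icc hγ)
  have real_part_notMem : ∀ j, (β j).1 ∉ Δpos := fun j hγ =>
    AffCorootPos.not_inverted_of_nonneg (hdom _ hγ) ((hchar _ _).1 ⟨j, rfl⟩)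
  refine ⟨fun j => ⟨(hroots j).resolve_left (real_part_notMem j), ?_⟩,
    fun γ hγ _ => ?_, fun γ hγ _ => degrees γ (fun h => hdisj γ h hγ)⟩
  · have hd : (β j).2 ∈ Set.Icc 1 (-pairω (β j).1) := by
      rw [← degrees _ (real_part_notMem j)]
      exact ⟨j, rfl⟩
    linarith [hd.1, hd.2]
  · rw [hβinj.nat_card_fiber_fst_eq, degrees γ (fun h => hdisj γ h hγ),
      Int.nat_card_Icc_one]
end

section
/- For λ anti-dominant, the generating function over quantum alcove paths satisfies the shift property C_{t_μ u}^{w} = x^μ · C_u^{w} for every μ ∈ X, where C_u^w = Σ_{p ∈ QB(u,w)} x^{wt(end(p))} q^{deg(qwt(p))}. -/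
/-!
Left multiplication by `t_μ` commutes with the right multiplications by the reflections
`s_{β_j}` that build a folded path, so it carries the path with folding set `J` starting at `u`
pointwise onto the path with the same folding set starting at `t_μ u`. Since `dir` and the
quantum/Bruhat nature of each fold are invariant under `t_μ` while `wt` is shifted by `μ`,
the two sums match term by term, each monomial being multiplied by `x^μ`.
-/

/- Encoding: `dir z` and `wt z` are the components of `z = t_{wt z} · dir z`, `s j` is the
reflection in the coroot `β_j` of a reduced word for `w`, `E` is the edge relation of the quantum
Bruhat graph, `qneg z j` says that the fold at `z` in the wall of `β_j` is a quantum edge, and the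
basis element `(ν, d)` of `ℤ[X × ℤ]` is the monomial `x^ν q^d`. -/

open scoped Classical

noncomputable def pathSeq {We : Type*} [Group We] {l : ℕ} (w : We) (s : Fin l → We)
    (u : We) (J : Finset (Fin l)) : List We :=
  (J.sort (· ≤ ·)).scanl (fun z j => z * s j) (u * w)

noncomputable def pathEnd {We : Type*} [Group We] {l : ℕ} (w : We) (s : Fin l → We)
    (u : We) (J : Finset (Fin l)) : We :=
  (J.sort (· ≤ ·)).foldl (fun z j => z * s j) (u * w)

noncomputable def IsQuantumPath {We W : Type*} [Group We] {l : ℕ} (w : We)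
    (s : Fin l → We) (dir : We → W) (E : W → W → Prop) (u : We) (J : Finset (Fin l)) :
    Prop :=
  List.Chain' E ((pathSeq w s u J).map dir)

/-- `deg (qwt p)`: the sum of the degrees of the coroots at the quantum foldings. -/
noncomputable def qwtDeg {We : Type*} [Group We] {l : ℕ} (w : We) (s : Fin l → We)
    (qneg : We → Fin l → Bool) (degβ : Fin l → ℤ) (u : We) (J : Finset (Fin l)) : ℤ :=
  (((pathSeq w s u J).tail).zip (J.sort (· ≤ ·))).foldl
    (fun acc p => if qneg p.1 p.2 then acc + degβ p.2 else acc) 0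

/-- The generating function `C_u^w` as an element of `ℤ[X × ℤ]`. -/
noncomputable def genFunC {We W : Type*} [Group We] {X : Type*} [AddCommGroup X] {l : ℕ}
    (w : We) (s : Fin l → We) (dir : We → W) (E : W → W → Prop) (wt : We → X)
    (qneg : We → Fin l → Bool) (degβ : Fin l → ℤ) (u : We) :
    AddMonoidAlgebra ℤ (X × ℤ) :=
  ∑ J : Finset (Fin l),
    if IsQuantumPath w s dir E u J then
      AddMonoidAlgebra.single (wt (pathEnd w s u J), qwtDeg w s qneg degβ u J) 1
    else 0

theorem List.scanl_hom {α₁ α₂ β : Type*} (f : α₁ → α₂) {g₁ : α₁ → β → α₁}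
    {g₂ : α₂ → β → α₂} (l : List β) (init : α₁) (H : ∀ x y, g₂ (f x) y = f (g₁ x y)) :
    l.scanl g₂ (f init) = (l.scanl g₁ init).map f := by
  induction l generalizing init with
  | nil => simp
  | cons a l ih => simp [List.scanl_cons, H, ih]

section LeftTranslation

variable {We W X : Type*} [Group We] [AddCommGroup X] {l : ℕ} (w : We) (s : Fin l → We)

theorem pathSeq_mul_left (g u : We) (J : Finset (Fin l)) :
    pathSeq w s (g * u) J = (pathSeq w s u J).map (g * ·) := by
  rw [pathSeq, mul_assoc]
  exact List.scanl_hom (g * ·) _ _ fun _ _ => mul_assoc _ _ _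

theorem pathEnd_mul_left (g u : We) (J : Finset (Fin l)) :
    pathEnd w s (g * u) J = g * pathEnd w s u J := by
  rw [pathEnd, mul_assoc]
  exact List.foldl_hom (g * ·) fun _ _ => mul_assoc _ _ _

theorem isQuantumPath_mul_left_iff {dir : We → W} (E : W → W → Prop) {g : We}
    (hdir : ∀ z, dir (g * z) = dir z) (u : We) (J : Finset (Fin l)) :
    IsQuantumPath w s dir E (g * u) J ↔ IsQuantumPath w s dir E u J := by
  rw [IsQuantumPath, IsQuantumPath, pathSeq_mul_left, List.map_map]
  exact iff_of_eq (congrArg _ (List.map_congr_left fun z _ => hdir z))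

theorem qwtDeg_mul_left {qneg : We → Fin l → Bool} (degβ : Fin l → ℤ) {g : We}
    (hqneg : ∀ z j, qneg (g * z) j = qneg z j) (u : We) (J : Finset (Fin l)) :
    qwtDeg w s qneg degβ (g * u) J = qwtDeg w s qneg degβ u J := by
  rw [qwtDeg, qwtDeg, pathSeq_mul_left, ← List.map_tail, List.zip_map_left, List.foldl_map]
  simp only [Prod.map_fst, hqneg]
  rfl

theorem genFunC_mul_left {dir : We → W} (E : W → W → Prop) {wt : We → X}
    {qneg : We → Fin l → Bool} (degβ : Fin l → ℤ) {g : We} {ν : X}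
    (hdir : ∀ z, dir (g * z) = dir z) (hwt : ∀ z, wt (g * z) = ν + wt z)
    (hqneg : ∀ z j, qneg (g * z) j = qneg z j) (u : We) :
    genFunC w s dir E wt qneg degβ (g * u) =
      AddMonoidAlgebra.single ((ν, 0) : X × ℤ) 1 * genFunC w s dir E wt qneg degβ u := by
  rw [genFunC, genFunC, Finset.mul_sum]
  refine Finset.sum_congr rfl fun J _ => ?_
  simp only [isQuantumPath_mul_left_iff w s E hdir, pathEnd_mul_left, hwt,
    qwtDeg_mul_left w s degβ hqneg, mul_ite, mul_zero, AddMonoidAlgebra.single_mul_single,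
    Prod.mk_add_mk, zero_add, mul_one]

end LeftTranslation

theorem genFunC_translation_shift
    {We W : Type*} [Group We] {X : Type*} [AddCommGroup X] {l : ℕ}
    (w : We)                              -- `w = t_λ`, `λ` anti-dominant
    (s : Fin l → We)                      -- reflections `s_{β_j}` of a reduced word for `w`
    (dir : We → W) (wt : We → X)          -- `z = t_{wt z} · dir z`
    (t : X → We)                          -- translations `μ ↦ t_μ`
    (E : W → W → Prop)                    -- quantum Bruhat graph edge relation
    (qneg : We → Fin l → Bool) (degβ : Fin l → ℤ)
    (hdir : ∀ (μ : X) (z : We), dir (t μ * z) = dir z)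
    (hwt : ∀ (μ : X) (z : We), wt (t μ * z) = μ + wt z)
    (hqneg : ∀ (μ : X) (z : We) (j : Fin l), qneg (t μ * z) j = qneg z j)
    (μ : X) (u : We) :
    genFunC w s dir E wt qneg degβ (t μ * u) =
      AddMonoidAlgebra.single ((μ, 0) : X × ℤ) 1 * genFunC w s dir E wt qneg degβ u :=
  genFunC_mul_left w s E degβ (hdir μ) (hwt μ) (hqneg μ) u
end
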